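/- arXiv:2112.05592 — 2 statements merged into one kernel-verified Lean document; each statement's English description precedes it below -/
import Mathlib

section
/- For a prime power q, an integer L ≥ 2, and r ∈ [0, L/(L+1)) with rn ∈ ℕ, there exists n(r,L) such that for all n ≥ n(r,L), every linear [n,k]_q code that is (r,L) list-decodable satisfies k ≤ n - ⌈((L+1)/L)·rn⌉. -/
/-!
Suppose `dim C > n - t` with `t = ⌈(L + 1)ρ / L⌉`. Then some `(L + 1)`-dimensional subcode `D`
is supported on a set `T` of `t + L` coordinates. Each coordinate restricts to a linear functional
on `D`, and there are only `q ^ (L + 1)` of these, so once `ρ` (hence `t`) is large, one functional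
`φ` occurs at `L + 1` coordinates of `T`. The kernel of `φ` has dimension at least `L`, so it holds
`L + 1` distinct codewords, all supported on the at most `t - 1` remaining coordinates. Cutting
these coordinates into `L + 1` nearly equal blocks and letting the center agree with the `i`-th
codeword on the `i`-th block puts every one of them within distance `⌈L(t - 1)/(L + 1)⌉ ≤ ρ` of
the center, which contradicts list decodability.
-/

open Module Finset

-- `ρ` is the absolute decoding radius, the `rn` of the paper.
def IsListDecodable {ι β : Type*} [Fintype ι] [DecidableEq β] (C : Set (ι → β)) (ρ L : ℕ) :
    Prop :=
  ∀ v : ι → β, {c ∈ C | hammingDist c v ≤ ρ}.ncard ≤ L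

theorem IsListDecodable.le_of_injective {ι β : Type*} [Fintype ι] [Finite β] [DecidableEq β]
    {C : Set (ι → β)} {ρ L k : ℕ} (hC : IsListDecodable C ρ L) {c : Fin k → ι → β}
    (hc : Function.Injective c) (hcC : ∀ i, c i ∈ C) (v : ι → β)
    (hv : ∀ i, hammingDist (c i) v ≤ ρ) : k ≤ L :=
  calc k = (Set.range c).ncard := by rw [Set.ncard_range_of_injective hc, Nat.card_fin]
    _ ≤ {c ∈ C | hammingDist c v ≤ ρ}.ncard :=
      Set.ncard_le_ncard (by rintro _ ⟨i, rfl⟩; exact ⟨hcC i, hv i⟩) (Set.toFinite _)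
    _ ≤ L := hC v

theorem Nat.sub_div_succ_le_of_mul_le {s e L : ℕ} (h : L * s ≤ (L + 1) * e) :
    s - s / (L + 1) ≤ e := by
  have hs : s = L * (s / (L + 1)) + s / (L + 1) + s % (L + 1) := by
    linarith [Nat.div_add_mod s (L + 1)]
  have hmod := Nat.mod_lt s L.succ_pos
  have key : (L + 1) * (L * (s / (L + 1)) + s % (L + 1)) < (L + 1) * (e + 1) := by nlinarith
  have := Nat.lt_of_mul_lt_mul_left key
  omega

theorem Finset.exists_fin_le_card_fiber {α : Type*} (s : Finset α) {m : ℕ} (hm : 0 < m) :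
    ∃ f : α → Fin m, ∀ i, #s / m ≤ #{j ∈ s | f j = i} := by
  classical
  let g : α → ℕ := fun j => if h : j ∈ s then s.equivFin ⟨j, h⟩ else 0
  refine ⟨fun j => ⟨g j % m, Nat.mod_lt _ hm⟩, fun i => ?_⟩
  calc #s / m ≤ (#s).count (· ≡ i [MOD m]) := by rw [Nat.count_modEq_card _ hm]; omega
    _ = #{x ∈ range #s | x ≡ i [MOD m]} := Nat.count_eq_card_filter_range _ _
    _ ≤ _ := by
      refine card_le_card_of_surjOn g fun x hx => ?_
      obtain ⟨hxs, hxi⟩ := mem_filter.mp hx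
      let j := s.equivFin.symm ⟨x, mem_range.mp hxs⟩
      have hgj : g j = x := by simp [g, j]
      refine ⟨j, mem_filter.mpr ⟨j.2, Fin.ext ?_⟩, hgj⟩
      change g j % m = i
      rw [hgj]
      exact (Nat.mod_eq_of_lt i.2).symm ▸ hxi

theorem exists_forall_hammingDist_le {ι β : Type*} [Fintype ι] [Zero β] [DecidableEq β]
    {m : ℕ} (hm : 0 < m) (c : Fin m → ι → β) (S : Finset ι) (hc : ∀ i, ∀ j ∉ S, c i j = 0) :
    ∃ v : ι → β, ∀ i, hammingDist (c i) v ≤ #S - #S / m := by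
  classical
  obtain ⟨f, hf⟩ := S.exists_fin_le_card_fiber hm
  refine ⟨fun j => c (f j) j, fun i => ?_⟩
  have hsub : ({j | c i j ≠ c (f j) j} : Finset ι) ⊆ S \ {j ∈ S | f j = i} := by
    intro j hj
    replace hj : c i j ≠ c (f j) j := (mem_filter.mp hj).2
    by_cases hjS : j ∈ S
    · refine mem_sdiff.mpr ⟨hjS, fun hji => hj ?_⟩
      rw [(mem_filter.mp hji).2]
    · exact absurd (by rw [hc i j hjS, hc (f j) j hjS]) hj
  calc hammingDist (c i) (fun j => c (f j) j) ≤ _ := card_le_card hsub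
    _ = #S - #{j ∈ S | f j = i} := card_sdiff_of_subset (filter_subset _ _)
    _ ≤ #S - #S / m := Nat.sub_le_sub_left (hf i) _

theorem Module.finrank_lt_natCard (K V : Type*) [Field K] [Finite K] [AddCommGroup V]
    [Module K V] [Module.Finite K V] : finrank K V < Nat.card V := by
  rw [Module.natCard_eq_pow_finrank (K := K)]
  calc finrank K V < 2 ^ finrank K V := Nat.lt_two_pow_self
    _ ≤ _ := Nat.pow_le_pow_left Finite.one_lt_card _

theorem exists_le_finrank_eq_forall_notMem_eq_zero {K ι : Type*} [Field K] [Fintype ι]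
    (C : Submodule K (ι → K)) (T : Finset ι) {m : ℕ}
    (h : Fintype.card ι + m ≤ finrank K C + #T) :
    ∃ D ≤ C, finrank K D = m ∧ ∀ c ∈ D, ∀ j ∉ T, c j = 0 := by
  classical
  let W := LinearMap.ker (LinearMap.funLeft K K ((↑) : {j // j ∉ T} → ι))
  have hW : finrank K W = #T := by
    dsimp only [W]
    have := LinearMap.finrank_range_add_finrank_ker
      (LinearMap.funLeft K K ((↑) : {j // j ∉ T} → ι))
    rw [LinearMap.range_eq_top.mpr
        (LinearMap.funLeft_surjective_of_injective _ _ _ Subtype.val_injective),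
      finrank_top, finrank_fintype_fun_eq_card, finrank_fintype_fun_eq_card,
      Fintype.card_subtype_compl, Fintype.card_coe] at this
    have := T.card_le_univ
    omega
  have hCW : m ≤ finrank K ↥(C ⊓ W) := by
    have := Submodule.finrank_sup_add_finrank_inf_eq C W
    have := (C ⊔ W).finrank_le
    rw [finrank_fintype_fun_eq_card] at this
    omega
  obtain ⟨f, hf⟩ := exists_linearIndependent_of_le_finrank hCW
  let D := Submodule.span K (Set.range fun i => (f i : ι → K))
  have hD : D ≤ C ⊓ W := Submodule.span_le.mpr (by rintro _ ⟨i, rfl⟩; exact (f i).2)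
  refine ⟨D, hD.trans inf_le_left, ?_, fun c hc j hj => ?_⟩
  · exact (finrank_span_eq_card (hf.map' _ (C ⊓ W).ker_subtype)).trans (Fintype.card_fin m)
  · exact congrFun (LinearMap.mem_ker.mp (hD hc).2) ⟨j, hj⟩

theorem exists_finrank_succ_le_forall_mem_eq_zero {K ι : Type*} [Field K] [Fintype K]
    (D : Submodule K (ι → K)) [FiniteDimensional K D] (T : Finset ι) {a : ℕ}
    (h : Fintype.card K ^ finrank K D * a ≤ #T) :
    ∃ D' ≤ D, finrank K D ≤ finrank K D' + 1 ∧
      ∃ Z ⊆ T, a ≤ #Z ∧ ∀ c ∈ D', ∀ j ∈ Z, c j = 0 := by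
  classical
  let ev : ι → Dual K D := fun j => (LinearMap.proj j).comp D.subtype
  have : Finite (Dual K D) := Module.finite_of_finite K
  let : Fintype (Dual K D) := Fintype.ofFinite _
  have hcard : Fintype.card (Dual K D) = Fintype.card K ^ finrank K D := by
    rw [Module.card_eq_pow_finrank (K := K), Subspace.dual_finrank_eq]
  obtain ⟨φ, -, hφ⟩ := exists_le_card_fiber_of_mul_le_card_of_maps_to (f := ev)
    (fun _ _ => mem_univ _) univ_nonempty (by rwa [card_univ, hcard])
  refine ⟨(LinearMap.ker φ).map D.subtype, Submodule.map_subtype_le _ _, ?_,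
    _, filter_subset _ _, hφ, ?_⟩
  · have := LinearMap.finrank_range_add_finrank_ker φ
    have := (LinearMap.range φ).finrank_le
    rw [finrank_self] at this
    rw [Submodule.finrank_map_subtype_eq]
    omega
  · rintro _ ⟨x, hx, rfl⟩ j hj
    rw [← (mem_filter.mp hj).2] at hx
    exact hx

theorem IsListDecodable.finrank_add_le {K ι : Type*} [Field K] [Fintype K] [DecidableEq K]
    [Fintype ι] {C : Submodule K (ι → K)} {ρ L m : ℕ}
    (hC : IsListDecodable (C : Set (ι → K)) ρ L)
    (hm : m ≤ Fintype.card ι) (hpig : Fintype.card K ^ (L + 1) * (L + 1) ≤ m)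
    (hρ : L * (m - (L + 1)) ≤ (L + 1) * ρ) :
    finrank K C + m ≤ Fintype.card ι + L := by
  classical
  by_contra! h
  obtain ⟨T, -, rfl⟩ := exists_subset_card_eq (s := (univ : Finset ι)) (n := m)
    (by rwa [card_univ])
  obtain ⟨D, hDC, hDrank, hDT⟩ :=
    exists_le_finrank_eq_forall_notMem_eq_zero C T (m := L + 1) (by omega)
  obtain ⟨D', hD'D, hD'rank, Z, hZT, hZ, hD'Z⟩ :=
    exists_finrank_succ_le_forall_mem_eq_zero D T (a := L + 1) (by rwa [hDrank])
  obtain ⟨c⟩ : Nonempty (Fin (L + 1) ↪ D') := Function.Embedding.nonempty_of_card_le <| by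
    simpa using (finrank_lt_natCard K D').trans_le' (by omega)
  have hc : ∀ i, ∀ j ∉ T \ Z, (c i : ι → K) j = 0 := by
    intro i j hj
    by_cases hjT : j ∈ T
    · exact hD'Z _ (c i).2 j (by simpa [hjT] using hj)
    · exact hDT _ (hD'D (c i).2) j hjT
  obtain ⟨v, hv⟩ := exists_forall_hammingDist_le L.succ_pos (fun i => (c i : ι → K)) _ hc
  have hZcard : #(T \ Z) = #T - #Z := card_sdiff_of_subset hZT
  have hcv : ∀ i, hammingDist (c i : ι → K) v ≤ ρ := fun i =>
    (hv i).trans (Nat.sub_div_succ_le_of_mul_le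
      ((Nat.mul_le_mul_left L (by omega)).trans hρ))
  have := hC.le_of_injective (Subtype.val_injective.comp c.injective)
    (fun i => hDC (hD'D (c i).2)) v hcv
  omega

theorem exists_forall_ge_radius_bounds {L : ℕ} {r : ℝ} (hr : r < L / (L + 1)) (a : ℕ) :
    ∃ N : ℕ, ∀ n e : ℕ, N ≤ n → (e : ℝ) = r * n → 0 < e →
      a ≤ e ∧ (L + 1) * e + L * L ≤ L * n := by
  have hgap : 0 < (L : ℝ) - (L + 1) * r := by
    rw [lt_div_iff₀ (by positivity)] at hr
    linarith
  refine ⟨⌈(a : ℝ) / r⌉₊ + ⌈(L * L : ℝ) / (L - (L + 1) * r)⌉₊, fun n e hn he he0 => ?_⟩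
  have hr0 : 0 < r := by
    have : (0 : ℝ) < r * n := he ▸ Nat.cast_pos.mpr he0
    exact pos_of_mul_pos_left this n.cast_nonneg
  have ha : (a : ℝ) / r ≤ n := Nat.ceil_le.mp (by omega)
  have hL : (L * L : ℝ) / (L - (L + 1) * r) ≤ n := Nat.ceil_le.mp (by omega)
  rw [div_le_iff₀ hr0] at ha
  rw [div_le_iff₀ hgap] at hL
  constructor
  · exact_mod_cast (show (a : ℝ) ≤ e by linarith)
  · exact_mod_cast (show ((L : ℝ) + 1) * e + L * L ≤ L * n by rw [he]; linarith)

theorem succ_mul_ceilDiv_bounds {L e n : ℕ} (hL : 0 < L) (h : (L + 1) * e + L * L ≤ L * n) :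
    e ≤ (L + 1) * e ⌈/⌉ L ∧ (L + 1) * e ⌈/⌉ L + L ≤ n ∧
      L * ((L + 1) * e ⌈/⌉ L - 1) ≤ (L + 1) * e := by
  set t := (L + 1) * e ⌈/⌉ L
  have hceil : ∀ c, t ≤ c ↔ (L + 1) * e ≤ L * c := fun c => ceilDiv_le_iff_le_mul hL
  refine ⟨?_, ?_, ?_⟩
  · by_contra! het
    have := (hceil (e - 1)).mp (by omega)
    rw [Nat.mul_sub_one, add_one_mul] at this
    omega
  · have hLn : L ≤ n := Nat.le_of_mul_le_mul_left (by omega) hL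
    have := (hceil (n - L)).mpr (by rw [Nat.mul_sub]; omega)
    omega
  · rcases Nat.eq_zero_or_pos t with ht | ht
    · simp [ht]
    · by_contra! hρ
      have := (hceil (t - 1)).mpr hρ.le
      omega

theorem stmt_5_general (F : Type*) [Field F] [Fintype F] [DecidableEq F]
    (L : ℕ) (r : ℝ)
    (hr1 : r < (L : ℝ) / (L + 1)) :
    ∃ N : ℕ, ∀ n rn : ℕ, N ≤ n → (rn : ℝ) = r * n →
      ∀ C : Submodule F (Fin n → F),
        (∀ v : Fin n → F,
          {c ∈ (C : Set (Fin n → F)) | hammingDist c v ≤ rn}.ncard ≤ L) →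
        Module.finrank F C ≤ n - ((L + 1) * rn + L - 1) / L := by
  obtain ⟨N, hN⟩ := exists_forall_ge_radius_bounds hr1 (Fintype.card F ^ (L + 1) * (L + 1))
  refine ⟨N, fun n e hn he C hC => ?_⟩
  rw [← Nat.ceilDiv_eq_add_pred_div]
  rcases Nat.eq_zero_or_pos e with rfl | he0
  · simpa using C.finrank_le
  obtain ⟨hpig, hbig⟩ := hN n e hn he he0
  have hL : 0 < L := Nat.pos_of_ne_zero fun h => by subst h; omega
  obtain ⟨het, htn, hρ⟩ := succ_mul_ceilDiv_bounds hL hbig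
  set t := (L + 1) * e ⌈/⌉ L
  have := IsListDecodable.finrank_add_le hC (m := t + L) (by simp only [Fintype.card_fin]; omega)
    (by omega) (by rwa [show t + L - (L + 1) = t - 1 by omega])
  simp only [Fintype.card_fin] at this
  omega

/-- For a prime power q (card of finite field F), L ≥ 2, r ∈ [0, L/(L+1))
with rn ∈ ℕ, there exists n(r,L) such that for all n ≥ n(r,L), every linear
[n,k]_q code that is (r,L) list-decodable has k ≤ n - ⌈((L+1)/L)·rn⌉. -/
theorem stmt_5 (F : Type*) [Field F] [Fintype F] [DecidableEq F]
    (L : ℕ) (r : ℝ)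
    (hL : 2 ≤ L)
    (hr0 : 0 ≤ r) (hr1 : r < (L : ℝ) / (L + 1)) :
    ∃ N : ℕ, ∀ n rn : ℕ, N ≤ n → (rn : ℝ) = r * n →
      ∀ C : Submodule F (Fin n → F),
        (∀ v : Fin n → F,
          {c ∈ (C : Set (Fin n → F)) | hammingDist c v ≤ rn}.ncard ≤ L) →
        Module.finrank F C ≤ n - ((L + 1) * rn + L - 1) / L :=
  stmt_5_general F L r hr1
end

section
/- For a prime power q, integers 1 ≤ ℓ ≤ q and ℓ ≤ L < ℓq, and r ∈ [0, 1 - ℓ/(L+1)) with rn ∈ ℕ, if C ⊆ 𝔽_q^n is a linear (r,ℓ,L) list-recoverable code of dimension at least 2, then the minimum distance of C satisfies d(C) > rn + ⌊(ℓ/(L+1-ℓ))·rn⌋. -/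
/-!
Suppose some nonzero `c ∈ C` has weight `w ≤ rn + ⌊ℓ rn / (L + 1 - ℓ)⌋`, and put `t = w - rn`,
so that `t (L + 1) ≤ ℓ w`. Extend `c` to an independent pair `c, c'` and take the `L + 1 ≤ ℓ q`
distinct codewords `a • c + b • c'` with `a ∈ F` and `b` in a fixed set `B` of `ℓ` scalars.
Off the support of `c` they all lie in the list `B • c'_i`. On the support, give the `k`-th
coordinate the values of the codewords with indices `kℓ, …, kℓ + ℓ - 1` taken mod `L + 1`:
since `ℓ ≤ L + 1`, every index is served on at least `t` coordinates, so every one of the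
`L + 1` codewords misses its list in at most `w - t ≤ rn` places, contradicting list-recoverability.
-/

open Finset Function Module Fin.NatCast

lemma sub_mul_le_mul_of_le_add_mul_div {a b N w : ℕ} (h : w ≤ a + b * a / (N - b)) :
    (w - a) * N ≤ b * w := by
  rcases le_or_gt w a with hwa | haw
  · simp [Nat.sub_eq_zero_of_le hwa]
  rcases le_or_gt N b with hNb | hbN
  · calc (w - a) * N ≤ w * b := Nat.mul_le_mul (Nat.sub_le w a) hNb
      _ = b * w := mul_comm w b
  have hdiv : (w - a) * (N - b) ≤ b * a := (Nat.le_div_iff_mul_le (by omega)).1 (by omega)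
  calc (w - a) * N = (w - a) * (N - b) + b * (w - a) := by
        rw [mul_comm b, ← mul_add, Nat.sub_add_cancel hbN.le]
    _ ≤ b * a + b * (w - a) := Nat.add_le_add_right hdiv _
    _ = b * w := by rw [← mul_add, Nat.add_sub_cancel' haw.le]

def cyclicBlock (N ℓ k : ℕ) [NeZero N] : Finset (Fin N) :=
  (range ℓ).image fun m => ((k * ℓ + m : ℕ) : Fin N)

section CyclicBlock

variable {N ℓ : ℕ} [NeZero N]

lemma card_cyclicBlock_le (k : ℕ) : #(cyclicBlock N ℓ k) ≤ ℓ :=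
  card_image_le.trans (card_range ℓ).le

lemma natCast_mem_cyclicBlock (hℓ : 0 < ℓ) (n : ℕ) : (n : Fin N) ∈ cyclicBlock N ℓ (n / ℓ) :=
  mem_image.2 ⟨n % ℓ, mem_range.2 (Nat.mod_lt n hℓ), by rw [Nat.div_add_mod']⟩

/-- The slots `j + dN` for `d < t` all lie among the first `w` blocks, in distinct blocks. -/
lemma le_card_filter_mem_cyclicBlock {t w : ℕ} (hℓN : ℓ ≤ N) (ht : t * N ≤ ℓ * w) (j : Fin N) :
    t ≤ #{k ∈ range w | j ∈ cyclicBlock N ℓ k} := by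
  rcases Nat.eq_zero_or_pos t with rfl | ht0
  · exact Nat.zero_le _
  have hℓ : 0 < ℓ := Nat.pos_of_ne_zero fun h => by
    simp [h, ht0.ne', NeZero.ne N] at ht
  let block : ℕ → ℕ := fun d => ((j : ℕ) + d * N) / ℓ
  have hblock : StrictMono block := strictMono_nat_of_lt_succ fun d =>
    calc ((j : ℕ) + d * N) / ℓ < ((j : ℕ) + d * N + ℓ) / ℓ := by
          rw [Nat.add_div_right _ hℓ]; exact Nat.lt_succ_self _
      _ ≤ ((j : ℕ) + (d + 1) * N) / ℓ := Nat.div_le_div_right (by rw [add_one_mul]; omega)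
  calc t = #((range t).image block) := by
        rw [card_image_of_injective _ hblock.injective, card_range]
    _ ≤ _ := card_le_card fun k hk => ?_
  obtain ⟨d, hd, rfl⟩ := mem_image.1 hk
  have hdt : (d + 1) * N ≤ t * N := Nat.mul_le_mul_right N (mem_range.1 hd)
  rw [add_one_mul] at hdt
  refine mem_filter.2 ⟨mem_range.2 (Nat.div_lt_of_lt_mul (by omega)), ?_⟩
  have hdN : ((d * N : ℕ) : Fin N) = 0 := Fin.natCast_eq_zero.2 (dvd_mul_left N d)
  simpa [block, hdN] using natCast_mem_cyclicBlock (N := N) hℓ (j + d * N)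

lemma exists_cover {α : Type*} (T : Finset α) {t : ℕ} (hℓN : ℓ ≤ N) (ht : t * N ≤ ℓ * #T) :
    ∃ J : α → Finset (Fin N), (∀ a, #(J a) ≤ ℓ) ∧ ∀ j, t ≤ #{a ∈ T | j ∈ J a} := by
  classical
  obtain ⟨idx, hidx⟩ : ∃ idx : α → ℕ, Set.SurjOn idx T (range #T) := by
    refine ⟨fun a => if h : a ∈ T then T.equivFin ⟨a, h⟩ else 0, fun k hk => ?_⟩
    let a := T.equivFin.symm ⟨k, mem_range.1 hk⟩
    exact ⟨a, a.2, by simp [a]⟩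
  refine ⟨fun a => cyclicBlock N ℓ (idx a), fun a => card_cyclicBlock_le _, fun j => ?_⟩
  calc t ≤ #{k ∈ range #T | j ∈ cyclicBlock N ℓ k} := le_card_filter_mem_cyclicBlock hℓN ht j
    _ ≤ #{a ∈ T | j ∈ cyclicBlock N ℓ (idx a)} := card_le_card_of_surjOn idx fun k hk => by
      obtain ⟨hkT, hjk⟩ := mem_filter.1 hk
      obtain ⟨a, ha, rfl⟩ := hidx hkT
      exact ⟨a, mem_filter.2 ⟨ha, hjk⟩, rfl⟩

end CyclicBlock

lemma exists_injective_codewords {F ι : Type*} [Field F] [Fintype F] {C : Submodule F (ι → F)}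
    (hC : 2 ≤ finrank F C) {c : ι → F} (hc : c ∈ C) (hc0 : c ≠ 0) (B : Finset F) {N : ℕ}
    (hN : N ≤ Fintype.card F * #B) :
    ∃ (c' : ι → F) (v : Fin N → ι → F), Injective v ∧ (∀ j, v j ∈ C) ∧
      ∀ j i, c i = 0 → ∃ b ∈ B, v j i = b * c' i := by
  obtain ⟨y, hy⟩ := exists_linearIndependent_pair_of_one_lt_finrank hC
    (x := ⟨c, hc⟩) (by simpa using hc0)
  obtain ⟨p⟩ : Nonempty (Fin N ↪ F × B) :=
    Function.Embedding.nonempty_of_card_le (by simpa using hN)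
  refine ⟨y, fun j => ((p j).1 • ⟨c, hc⟩ + ((p j).2 : F) • y : C), fun j j' h => ?_,
    fun j => Submodule.coe_mem _, fun j i hi => ⟨(p j).2, (p j).2.2, by simp [hi]⟩⟩
  obtain ⟨h1, h2⟩ := hy.eq_of_pair (Subtype.ext h)
  exact p.injective (Prod.ext h1 (Subtype.ext h2))

lemma card_filter_not_mem_le {ι α : Type*} [Fintype ι] [DecidableEq α] {x : ι → α}
    {S : ι → Finset α} (T : Finset ι) (P : ι → Prop) [DecidablePred P]
    (hP : ∀ i ∈ T, P i → x i ∈ S i) (hT : ∀ i ∉ T, x i ∈ S i) :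
    #{i | x i ∉ S i} ≤ #T - #{i ∈ T | P i} := by
  have hsub : ({i | x i ∉ S i} : Finset ι) ⊆ {i ∈ T | ¬P i} := fun i hi => by
    have hxi := (mem_filter.1 hi).2
    have hiT : i ∈ T := by_contra fun hiT => hxi (hT i hiT)
    exact mem_filter.2 ⟨hiT, fun hPi => hxi (hP i hiT hPi)⟩
  rw [← card_filter_add_card_filter_not (s := T) P, Nat.add_sub_cancel_left]
  exact card_le_card hsub

theorem stmt_15_general (F : Type*) [Field F] [Fintype F] [DecidableEq F]
    (ℓ L n rn : ℕ)
    (hℓq : ℓ ≤ Fintype.card F)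
    (hℓL : ℓ ≤ L) (hLq : L < ℓ * Fintype.card F)
    (C : Submodule F (Fin n → F)) (hdim : 2 ≤ Module.finrank F C)
    (hLR : ∀ S : Fin n → Finset F, (∀ i, (S i).card ≤ ℓ) →
      {c ∈ (C : Set (Fin n → F)) |
        (Finset.univ.filter (fun i => c i ∉ S i)).card ≤ rn}.ncard ≤ L) :
    ∀ c ∈ C, c ≠ 0 → rn + ℓ * rn / (L + 1 - ℓ) < hammingNorm c := by
  intro c hc hc0
  by_contra! hw
  obtain ⟨B, -, hB⟩ := exists_subset_card_eq (s := (univ : Finset F)) (by simpa using hℓq)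
  obtain ⟨c', v, hv, hvC, hv_off⟩ := exists_injective_codewords hdim hc hc0 B (N := L + 1)
    (by rw [hB, mul_comm]; omega)
  let T : Finset (Fin n) := {i | c i ≠ 0}
  obtain ⟨J, hJ, hcover⟩ := exists_cover T (N := L + 1) (by omega)
    (sub_mul_le_mul_of_le_add_mul_div hw)
  let S i := if i ∈ T then (J i).image (v · i) else B.image (· * c' i)
  have hS : ∀ i, #(S i) ≤ ℓ := fun i => by
    by_cases hi : i ∈ T
    · simpa [S, hi] using card_image_le.trans (hJ i)
    · simpa [S, hi, hB] using card_image_le (s := B) (f := (· * c' i))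
  have hclose : ∀ j, #{i | v j i ∉ S i} ≤ rn := fun j => by
    have hmiss := card_filter_not_mem_le (x := v j) (S := S) T (j ∈ J ·)
      (fun i hi hj => by simpa [S, hi] using mem_image_of_mem (v · i) hj)
      (fun i hi => by simpa [S, hi, eq_comm] using hv_off j i (by simpa [T] using hi))
    have hT : #T = hammingNorm c := rfl
    have := hcover j
    omega
  have hlist : L + 1 ≤ L := calc
    L + 1 = (Set.univ : Set (Fin (L + 1))).ncard := by simp
    _ ≤ {c ∈ (C : Set (Fin n → F)) | #{i | c i ∉ S i} ≤ rn}.ncard :=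
      Set.ncard_le_ncard_of_injOn v (fun j _ => ⟨hvC j, hclose j⟩) hv.injOn
    _ ≤ L := hLR S hS
  omega

/-- For a finite field F with q elements, 1 ≤ ℓ ≤ q, ℓ ≤ L < ℓq,
r ∈ [0, 1 - ℓ/(L+1)) with rn ∈ ℕ: a linear (r,ℓ,L) list-recoverable code
C ⊆ F^n of dimension at least 2 has minimum distance
d(C) > rn + ⌊(ℓ/(L+1-ℓ))·rn⌋. -/
theorem stmt_15 (F : Type*) [Field F] [Fintype F] [DecidableEq F]
    (ℓ L n rn : ℕ) (r : ℝ)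
    (hℓ1 : 1 ≤ ℓ) (hℓq : ℓ ≤ Fintype.card F)
    (hℓL : ℓ ≤ L) (hLq : L < ℓ * Fintype.card F)
    (hr0 : 0 ≤ r) (hr1 : r < 1 - (ℓ : ℝ) / (L + 1))
    (hrn : (rn : ℝ) = r * n)
    (C : Submodule F (Fin n → F)) (hdim : 2 ≤ Module.finrank F C)
    (hLR : ∀ S : Fin n → Finset F, (∀ i, (S i).card ≤ ℓ) →
      {c ∈ (C : Set (Fin n → F)) |
        (Finset.univ.filter (fun i => c i ∉ S i)).card ≤ rn}.ncard ≤ L) :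
    ∀ c ∈ C, c ≠ 0 → rn + ℓ * rn / (L + 1 - ℓ) < hammingNorm c :=
  stmt_15_general F ℓ L n rn hℓq hℓL hLq C hdim hLR
end
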